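/- Let N be a nest with an infinite-dimensional atom E = N₊ ⊖ N. Then the compression map γ : T(N) → B(E), γ(X) = P(E)X|_E, is a surjective algebra homomorphism, and consequently both the left and right topological stable ranks of T(N) are infinite. -/

import Mathlib

set_option synthInstance.maxHeartbeats 1000000
set_option maxHeartbeats 1000000

/-- `n`-tuples generating `A` as a left ideal. -/
noncomputable def Lg (A : Type*) [NormedRing A] (n : ℕ) : Set (Fin n → A) :=
  {a | ∃ b : Fin n → A, ∑ i, b i * a i = 1}

/-- `n`-tuples generating `A` as a right ideal. -/
noncomputable def Rg (A : Type*) [NormedRing A] (n : ℕ) : Set (Fin n → A) :=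
  {a | ∃ b : Fin n → A, ∑ i, a i * b i = 1}

/-- The left topological stable rank. -/
noncomputable def ltsr (A : Type*) [NormedRing A] : ℕ∞ :=
  sInf {N : ℕ∞ | ∃ n : ℕ, N = n ∧ Dense (Lg A n)}

/-- The right topological stable rank. -/
noncomputable def rtsr (A : Type*) [NormedRing A] : ℕ∞ :=
  sInf {N : ℕ∞ | ∃ n : ℕ, N = n ∧ Dense (Rg A n)}


/-- A nest: a chain of closed subspaces containing `{0}` and `H`, closed under
intersections and closed linear spans. -/
structure IsNest {H : Type*} [NormedAddCommGroup H] [InnerProductSpace ℂ H]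
    (𝒩 : Set (Submodule ℂ H)) : Prop where
  isClosed : ∀ N ∈ 𝒩, IsClosed (N : Set H)
  isChain : IsChain (· ≤ ·) 𝒩
  bot_mem : ⊥ ∈ 𝒩
  top_mem : ⊤ ∈ 𝒩
  sInf_mem : ∀ S ⊆ 𝒩, S.Nonempty → sInf S ∈ 𝒩
  span_mem : ∀ S ⊆ 𝒩, S.Nonempty → (sSup S).topologicalClosure ∈ 𝒩

/-- The nest algebra of all bounded operators leaving every subspace of `𝒩` invariant. -/
noncomputable def nestAlgebra {H : Type*} [NormedAddCommGroup H] [InnerProductSpace ℂ H]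
    (𝒩 : Set (Submodule ℂ H)) : Subalgebra ℂ (H →L[ℂ] H) where
  carrier := {T | ∀ N ∈ 𝒩, ∀ x ∈ N, T x ∈ N}
  mul_mem' := fun hT hS N hN x hx => hT N hN _ (hS N hN x hx)
  add_mem' := fun hT hS N hN x hx => N.add_mem (hT N hN x hx) (hS N hN x hx)
  algebraMap_mem' := fun c N hN x hx => by
    simpa [Algebra.algebraMap_eq_smul_one] using N.smul_mem c hx

/-!
The compression `γ` to the atom `E = N₊ ⊖ N` is multiplicative because `E` is the difference of
the invariant subspaces `N ≤ N₊`, and it is surjective because an operator on `E`, extended by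
zero, leaves invariant every member of the nest (each lies below `N` or above `N₊`).

A continuous surjective ring homomorphism carries a dense set of left (right) generating
`n`-tuples to a dense set, and the adjoint turns right generators into left ones. So it suffices
that left generating `n`-tuples are never dense in `B(E)`. Embedding `Eⁿ` isometrically into `E`
with a unit vector `k` to spare gives a co-isometry `W : E → Eⁿ` with `W k = 0`; every operator
`D` close to `W` still has a nonzero kernel vector, whereas the column of a left generating tuple
is injective.
-/

section StableRank

variable {A B : Type*} [NormedRing A] [NormedRing B] {n : ℕ}

theorem ltsr_eq_top_iff : ltsr A = ⊤ ↔ ∀ n, ¬ Dense (Lg A n) := by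
  rw [ltsr, sInf_eq_top]
  exact ⟨fun h n hn => ENat.natCast_ne_top n (h n ⟨n, rfl, hn⟩),
    fun h _ ⟨n, _, hn⟩ => (h n hn).elim⟩

theorem rtsr_eq_top_iff : rtsr A = ⊤ ↔ ∀ n, ¬ Dense (Rg A n) := by
  rw [rtsr, sInf_eq_top]
  exact ⟨fun h n hn => ENat.natCast_ne_top n (h n ⟨n, rfl, hn⟩),
    fun h _ ⟨n, _, hn⟩ => (h n hn).elim⟩

theorem Dense.image_comp_left {α β ι : Type*} [TopologicalSpace α] [TopologicalSpace β]
    {f : α → β} (hc : Continuous f) (hs : Function.Surjective f) {S : Set (ι → α)}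
    (hS : Dense S) : Dense ((f ∘ ·) '' S) :=
  hs.comp_left.denseRange.dense_image (continuous_pi fun i => hc.comp (continuous_apply i)) hS

theorem Dense.Lg_of_surjective (φ : A →+* B) (hc : Continuous φ) (hs : Function.Surjective φ)
    (hd : Dense (Lg A n)) : Dense (Lg B n) := by
  refine (hd.image_comp_left hc hs).mono ?_
  rintro _ ⟨a, ⟨b, hb⟩, rfl⟩
  exact ⟨φ ∘ b, by simp only [Function.comp_apply, ← map_mul, ← map_sum, hb, map_one]⟩

theorem Dense.Rg_of_surjective (φ : A →+* B) (hc : Continuous φ) (hs : Function.Surjective φ)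
    (hd : Dense (Rg A n)) : Dense (Rg B n) := by
  refine (hd.image_comp_left hc hs).mono ?_
  rintro _ ⟨a, ⟨b, hb⟩, rfl⟩
  exact ⟨φ ∘ b, by simp only [Function.comp_apply, ← map_mul, ← map_sum, hb, map_one]⟩

theorem Dense.Lg_of_Rg [StarRing B] [ContinuousStar B] (hd : Dense (Rg B n)) :
    Dense (Lg B n) := by
  refine (hd.image_comp_left continuous_star star_involutive.surjective).mono ?_
  rintro _ ⟨a, ⟨b, hb⟩, rfl⟩
  exact ⟨star ∘ b, by
    simp only [Function.comp_apply, ← star_mul, ← star_sum, hb, star_one]⟩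

end StableRank

section Operators

variable {𝕜 X Y : Type*} [NontriviallyNormedField 𝕜]
  [NormedAddCommGroup X] [NormedSpace 𝕜 X] [NormedAddCommGroup Y] [NormedSpace 𝕜 Y]

theorem ContinuousLinearMap.exists_ne_zero_apply_eq_zero_of_norm_sub_mul_lt_one [CompleteSpace Y]
    {W D : X →L[𝕜] Y} {V : Y →L[𝕜] X} (hWV : W ∘L V = 1) {k : X} (hk : k ≠ 0)
    (hWk : W k = 0) (hD : ‖D - W‖ * ‖V‖ < 1) : ∃ x ≠ 0, D x = 0 := by
  have hC : IsUnit (D ∘L V) := by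
    have h : ‖(W - D) ∘L V‖ < 1 := ((W - D).opNorm_comp_le V).trans_lt (by rwa [norm_sub_rev])
    simpa [ContinuousLinearMap.sub_comp, hWV] using isUnit_one_sub_of_norm_lt_one h
  obtain ⟨C, hCeq⟩ := hC
  have hWV' : ∀ y, W (V y) = y := fun y => congrFun (congrArg DFunLike.coe hWV) y
  refine ⟨k - V (C⁻¹.val (D k)), fun h0 => hk ?_, ?_⟩
  · have hkV : k = V (C⁻¹.val (D k)) := sub_eq_zero.1 h0
    have : C⁻¹.val (D k) = 0 := by rw [← hWV' (C⁻¹.val (D k)), ← hkV, hWk]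
    rw [hkV, this, map_zero]
  · have hCinv : D (V (C⁻¹.val (D k))) = D k := by
      rw [← ContinuousLinearMap.comp_apply D V, ← hCeq, ← mul_apply_eq_comp,
        Units.mul_inv, one_apply_eq_self]
    rw [map_sub, hCinv, sub_self]

theorem eq_zero_of_mem_Lg {n : ℕ} {d : Fin n → X →L[𝕜] X}
    (hd : d ∈ Lg (X →L[𝕜] X) n) {x : X} (hx : ∀ i, d i x = 0) : x = 0 := by
  obtain ⟨b, hb⟩ := hd
  simpa [hx] using congrArg (fun T : X →L[𝕜] X => T x) hb.symm

theorem not_dense_Lg_of_rightInverse [CompleteSpace X] {n : ℕ} {W : X →L[𝕜] (Fin n → X)}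
    {V : (Fin n → X) →L[𝕜] X} (hWV : W ∘L V = 1) {k : X} (hk : k ≠ 0) (hWk : W k = 0) :
    ¬ Dense (Lg (X →L[𝕜] X) n) := by
  intro hdense
  let w : Fin n → X →L[𝕜] X := fun i => ContinuousLinearMap.proj i ∘L W
  have hε : 0 < (‖V‖ + 1)⁻¹ := by positivity
  obtain ⟨d, hdLg, hdw⟩ := Metric.mem_closure_iff.1 (hdense w) _ hε
  have hpi : ContinuousLinearMap.pi d - W = ContinuousLinearMap.pi (fun i => d i - w i) := by
    ext x i; simp [w]
  have hdist : ‖ContinuousLinearMap.pi d - W‖ ≤ dist w d := by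
    rw [hpi]
    refine ContinuousLinearMap.norm_pi_le_of_le (fun i => ?_) dist_nonneg
    rw [← dist_eq_norm, dist_comm]
    exact dist_le_pi_dist w d i
  have hD : ‖ContinuousLinearMap.pi d - W‖ * ‖V‖ < 1 :=
    calc ‖ContinuousLinearMap.pi d - W‖ * ‖V‖ ≤ (‖V‖ + 1)⁻¹ * ‖V‖ := by
          gcongr; exact hdist.trans hdw.le
      _ < 1 := by rw [inv_mul_lt_one₀ (by positivity)]; linarith
  obtain ⟨x, hx0, hDx⟩ :=
    ContinuousLinearMap.exists_ne_zero_apply_eq_zero_of_norm_sub_mul_lt_one hWV hk hWk hD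
  exact hx0 (eq_zero_of_mem_Lg hdLg fun i => congrFun hDx i)

end Operators

section Hilbert

open scoped InnerProductSpace

variable {𝕜 X : Type*} [RCLike 𝕜] [NormedAddCommGroup X] [InnerProductSpace 𝕜 X]

theorem Orthonormal.countable [TopologicalSpace.SeparableSpace X] {ι : Type*} {v : ι → X}
    (hv : Orthonormal 𝕜 v) : Countable ι := by
  refine Pairwise.countable_of_isOpen_disjoint (s := fun i => Metric.ball (v i) (1 / 2))
    (fun i j hij => Metric.ball_disjoint_ball ?_) (fun _ => Metric.isOpen_ball)
    (fun _ => Metric.nonempty_ball.2 (by norm_num))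
  have hsq : ‖v i - v j‖ ^ 2 = 2 := by
    rw [@norm_sub_sq 𝕜, hv.1 i, hv.1 j, hv.2 hij]
    norm_num
  rw [dist_eq_norm]
  nlinarith [norm_nonneg (v i - v j)]

theorem HilbertBasis.finiteDimensional [CompleteSpace X] {ι : Type*} [Finite ι]
    (b : HilbertBasis ι 𝕜 X) : FiniteDimensional 𝕜 X :=
  have := Fintype.ofFinite ι
  b.toOrthonormalBasis.toBasis.finiteDimensional_of_finite

/-- The isometry maps the Hilbert basis of `Y` into the Hilbert basis of `X` with one basis
vector `k` to spare. -/
theorem exists_linearIsometry_orthogonal_ne_zero (Y : Type*) [NormedAddCommGroup Y]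
    [InnerProductSpace 𝕜 Y] [CompleteSpace Y] [TopologicalSpace.SeparableSpace Y]
    [CompleteSpace X] [TopologicalSpace.SeparableSpace X] (hX : ¬ FiniteDimensional 𝕜 X) :
    ∃ (V : Y →ₗᵢ[𝕜] X) (k : X), k ≠ 0 ∧ ∀ y, ⟪k, V y⟫_𝕜 = 0 := by
  obtain ⟨wX, bX, -⟩ := exists_hilbertBasis 𝕜 X
  obtain ⟨wY, bY, -⟩ := exists_hilbertBasis 𝕜 Y
  have : Countable wY := bY.orthonormal.countable
  have : Infinite wX := by
    by_contra h
    have : Finite wX := not_infinite_iff_finite.1 h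
    exact hX bX.finiteDimensional
  let e := Infinite.natEmbedding wX
  obtain ⟨f, hf⟩ := exists_injective_nat wY
  have hv : Orthonormal 𝕜 (fun a => bX (e (f a + 1))) :=
    bX.orthonormal.comp _ (fun a b h => hf (Nat.succ_injective (e.injective h)))
  let V := hv.orthogonalFamily.linearIsometry.comp bY.repr.toLinearIsometry
  refine ⟨V, bX (e 0), bX.orthonormal.ne_zero _, fun y => ?_⟩
  have hsum :=
    (hv.orthogonalFamily.hasSum_linearIsometry (bY.repr y)).mapL (innerSL 𝕜 (bX (e 0)))
  refine hsum.unique (hasSum_zero.congr_fun fun a => ?_)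
  simp [bX.orthonormal.2 (e.injective.ne (Nat.succ_ne_zero (f a)).symm)]

theorem exists_rightInverse_ne_zero_mem_ker [CompleteSpace X] [TopologicalSpace.SeparableSpace X]
    (hX : ¬ FiniteDimensional 𝕜 X) (n : ℕ) :
    ∃ (W : X →L[𝕜] (Fin n → X)) (V : (Fin n → X) →L[𝕜] X), W ∘L V = 1 ∧
      ∃ k ≠ 0, W k = 0 := by
  have : SecondCountableTopology X := UniformSpace.secondCountable_of_separable X
  let e := PiLp.continuousLinearEquiv 2 𝕜 (fun _ : Fin n => X)
  obtain ⟨V, k, hk, hkV⟩ :=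
    exists_linearIsometry_orthogonal_ne_zero (PiLp 2 fun _ : Fin n => X) hX
  refine ⟨e ∘L V.toContinuousLinearMap.adjoint, V.toContinuousLinearMap ∘L e.symm, ?_,
    k, hk, ?_⟩
  · have hVV (z) : V.toContinuousLinearMap.adjoint (V z) = z :=
      congrFun (congrArg DFunLike.coe V.adjoint_comp_self) z
    ext y : 1
    simp [hVV]
  · have : V.toContinuousLinearMap.adjoint k = 0 := ext_inner_right 𝕜 fun y => by
      rw [ContinuousLinearMap.adjoint_inner_left, inner_zero_left]; exact hkV y
    simp [this]

theorem not_dense_Lg_of_not_finiteDimensional [CompleteSpace X]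
    [TopologicalSpace.SeparableSpace X] (hX : ¬ FiniteDimensional 𝕜 X) (n : ℕ) :
    ¬ Dense (Lg (X →L[𝕜] X) n) :=
  have ⟨_, _, hWV, _, hk, hWk⟩ := exists_rightInverse_ne_zero_mem_ker hX n
  not_dense_Lg_of_rightInverse hWV hk hWk

end Hilbert

section Compression

open scoped InnerProductSpace

variable {𝕜 H : Type*} [RCLike 𝕜] [NormedAddCommGroup H] [InnerProductSpace 𝕜 H]

/-- The compression `P(K) T |_K`. -/
noncomputable def compression (K : Submodule 𝕜 H) [K.HasOrthogonalProjection]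
    (T : H →L[𝕜] H) : K →L[𝕜] K :=
  K.orthogonalProjectionOnto ∘L T ∘L K.subtypeL

theorem continuous_compression (K : Submodule 𝕜 H) [K.HasOrthogonalProjection] :
    Continuous (compression K) :=
  continuous_const.clm_comp (continuous_id.clm_comp continuous_const)

theorem compression_one (K : Submodule 𝕜 H) [K.HasOrthogonalProjection] :
    compression K 1 = 1 := by
  ext x
  simp [compression]

theorem compression_add (K : Submodule 𝕜 H) [K.HasOrthogonalProjection] (S T : H →L[𝕜] H) :
    compression K (S + T) = compression K S + compression K T := by
  ext x
  simp [compression]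

theorem compression_dilation (K : Submodule 𝕜 H) [K.HasOrthogonalProjection]
    (T : K →L[𝕜] K) :
    compression K (K.subtypeL ∘L T ∘L K.orthogonalProjectionOnto) = T := by
  ext x
  simp [compression]

theorem starProjection_inf_orthogonal {N M : Submodule 𝕜 H} [N.HasOrthogonalProjection]
    [(M ⊓ Nᗮ).HasOrthogonalProjection] (hNM : N ≤ M) {u : H} (hu : u ∈ M) :
    (M ⊓ Nᗮ).starProjection u = u - N.starProjection u := by
  refine Submodule.eq_starProjection_of_mem_of_inner_eq_zero
    (Submodule.mem_inf.2
      ⟨M.sub_mem hu (hNM (N.starProjection_apply_mem u)),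
        N.sub_starProjection_mem_orthogonal u⟩)
    fun w hw => ?_
  rw [sub_sub_cancel]
  exact hw.2 _ (N.starProjection_apply_mem u)

/-- For `x ∈ M ⊖ N`, `T x - P(M ⊖ N) T x` lies in `N`, which `S` maps into `(M ⊖ N)ᗮ`. -/
theorem compression_mul {N M : Submodule 𝕜 H} [N.HasOrthogonalProjection]
    [(M ⊓ Nᗮ).HasOrthogonalProjection] (hNM : N ≤ M) {S T : H →L[𝕜] H}
    (hS : ∀ x ∈ N, S x ∈ N) (hT : ∀ x ∈ M, T x ∈ M) :
    compression (M ⊓ Nᗮ) (S * T) = compression (M ⊓ Nᗮ) S * compression (M ⊓ Nᗮ) T := by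
  ext x
  have hTx : T x ∈ M := hT x x.2.1
  have hker : (M ⊓ Nᗮ).orthogonalProjectionOnto
      (S (T x - (M ⊓ Nᗮ).starProjection (T x))) = 0 :=
    Submodule.orthogonalProjectionOnto_eq_zero_iff.2 <|
      Submodule.orthogonal_le inf_le_right <| N.le_orthogonal_orthogonal <|
        hS _ (by rw [starProjection_inf_orthogonal hNM hTx, sub_sub_cancel]; simp)
  rw [map_sub, map_sub, sub_eq_zero] at hker
  simpa [compression] using congrArg Subtype.val hker

noncomputable def compressionRingHom (A : Subalgebra 𝕜 (H →L[𝕜] H)) (K : Submodule 𝕜 H)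
    [K.HasOrthogonalProjection]
    (hmul : ∀ S T : A, compression K (S * T : A) = compression K S * compression K T) :
    A →+* (K →L[𝕜] K) where
  toFun S := compression K S
  map_one' := compression_one K
  map_mul' := hmul
  map_zero' := by ext; simp [compression]
  map_add' S T := compression_add K S T

end Compression

section Nest

variable {H : Type*} [NormedAddCommGroup H] [InnerProductSpace ℂ H]
  {𝒩 : Set (Submodule ℂ H)} {N : Submodule ℂ H}

theorem IsNest.sInf_gt_mem (h𝒩 : IsNest 𝒩) : sInf {M | M ∈ 𝒩 ∧ N < M} ∈ 𝒩 := by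
  rcases Set.eq_empty_or_nonempty {M | M ∈ 𝒩 ∧ N < M} with h | h
  · rw [h, sInf_empty]
    exact h𝒩.top_mem
  · exact h𝒩.sInf_mem _ (fun M hM => hM.1) h

theorem IsNest.le_or_sInf_gt_le (h𝒩 : IsNest 𝒩) (hN : N ∈ 𝒩) {M : Submodule ℂ H}
    (hM : M ∈ 𝒩) :
    M ≤ N ∨ sInf {M | M ∈ 𝒩 ∧ N < M} ≤ M := by
  rcases h𝒩.isChain.total hM hN with h | h
  · exact .inl h
  · rcases h.lt_or_eq with h | rfl
    · exact .inr (sInf_le ⟨hM, h⟩)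
    · exact .inl le_rfl

theorem dilation_mem_nestAlgebra {Nplus : Submodule ℂ H}
    (hgap : ∀ M ∈ 𝒩, M ≤ N ∨ Nplus ≤ M) [(Nplus ⊓ Nᗮ).HasOrthogonalProjection]
    (T : ↥(Nplus ⊓ Nᗮ) →L[ℂ] ↥(Nplus ⊓ Nᗮ)) :
    (Nplus ⊓ Nᗮ).subtypeL ∘L T ∘L (Nplus ⊓ Nᗮ).orthogonalProjectionOnto ∈
      nestAlgebra 𝒩 := by
  intro M hM x hx
  rcases hgap M hM with hMN | hNM
  · have hx0 : (Nplus ⊓ Nᗮ).orthogonalProjectionOnto x = 0 :=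
      Submodule.orthogonalProjectionOnto_eq_zero_iff.2 <|
        Submodule.orthogonal_le inf_le_right (N.le_orthogonal_orthogonal (hMN hx))
    simp [hx0]
  · exact hNM (T _).2.1

end Nest

/-- If a nest has an infinite-dimensional atom `E = N₊ ⊖ N`, then compression to `E` is a
surjective multiplicative homomorphism of the nest algebra onto `B(E)`, and both the left
and right topological stable ranks of the nest algebra are infinite. -/
theorem stmt16 {H : Type*} [NormedAddCommGroup H] [InnerProductSpace ℂ H] [CompleteSpace H]
    [TopologicalSpace.SeparableSpace H]
    (𝒩 : Set (Submodule ℂ H)) (h𝒩 : IsNest 𝒩)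
    (N Nplus : Submodule ℂ H) (hN : N ∈ 𝒩)
    (hplus : Nplus = sInf {M | M ∈ 𝒩 ∧ N < M})
    (E : Submodule ℂ H) [CompleteSpace E] (hE : E = Nplus ⊓ Nᗮ)
    (hinf : ¬ FiniteDimensional ℂ E) :
    (∀ X Y : nestAlgebra 𝒩,
        E.orthogonalProjectionOnto.comp (((X * Y : nestAlgebra 𝒩) : H →L[ℂ] H).comp E.subtypeL) =
          (E.orthogonalProjectionOnto.comp ((X : H →L[ℂ] H).comp E.subtypeL)) *
            (E.orthogonalProjectionOnto.comp ((Y : H →L[ℂ] H).comp E.subtypeL))) ∧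
      Function.Surjective (fun X : nestAlgebra 𝒩 =>
        E.orthogonalProjectionOnto.comp ((X : H →L[ℂ] H).comp E.subtypeL)) ∧
      ltsr (nestAlgebra 𝒩) = ⊤ ∧ rtsr (nestAlgebra 𝒩) = ⊤ := by
  subst hE
  have : CompleteSpace N := (h𝒩.isClosed N hN).completeSpace_coe
  have : SecondCountableTopology H := UniformSpace.secondCountable_of_separable H
  have hNplus : Nplus ∈ 𝒩 := hplus ▸ h𝒩.sInf_gt_mem
  have hNle : N ≤ Nplus := hplus ▸ le_sInf fun M hM => hM.2.le
  have hgap : ∀ M ∈ 𝒩, M ≤ N ∨ Nplus ≤ M :=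
    hplus ▸ fun M hM => h𝒩.le_or_sInf_gt_le hN hM
  have hmul : ∀ X Y : nestAlgebra 𝒩, compression (Nplus ⊓ Nᗮ) (X * Y : nestAlgebra 𝒩) =
      compression (Nplus ⊓ Nᗮ) X * compression (Nplus ⊓ Nᗮ) Y :=
    fun X Y => compression_mul hNle (X.2 N hN) (Y.2 Nplus hNplus)
  have hsurj : Function.Surjective (compressionRingHom (nestAlgebra 𝒩) _ hmul) :=
    fun T => ⟨⟨_, dilation_mem_nestAlgebra hgap T⟩, compression_dilation _ T⟩
  have hcont : Continuous (compressionRingHom (nestAlgebra 𝒩) _ hmul) :=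
    (continuous_compression _).comp continuous_subtype_val
  refine ⟨hmul, hsurj, ltsr_eq_top_iff.2 fun n hd => ?_, rtsr_eq_top_iff.2 fun n hd => ?_⟩
  · exact not_dense_Lg_of_not_finiteDimensional hinf n (hd.Lg_of_surjective _ hcont hsurj)
  · exact not_dense_Lg_of_not_finiteDimensional hinf n (hd.Rg_of_surjective _ hcont hsurj).Lg_of_Rg
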